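/- Let n ≥ q ≥ 4, let μ_1, ..., μ_n ≥ 0 and let d_1 ≥ ... ≥ d_n with ∑ d_i = 2(n−1), d_i > 1 for i ≤ q and d_i = 1 for i > q. Then the ROCP objective f(X) = (1/2) ∑_{i,j=1}^n ∑_{k,l=1}^q μ_i x_{ik} μ_j x_{jl} |k−l| is a concave function of X on the affine set of real n × q matrices satisfying ∑_{k=1}^q x_{ik} = 1 for every i = 1, ..., n; that is, for all such matrices X, Y and all t ∈ [0,1], f(tX + (1−t)Y) ≥ t f(X) + (1−t) f(Y). -/

import Mathlib

open Matrix Finset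

/-- The ROCP objective `f(X) = (1/2) ∑_{i,j} ∑_{k,l} μ_i x_{ik} μ_j x_{jl} |k - l|`. -/
noncomputable def fROCP {n q : ℕ} (μ : Fin n → ℝ) (X : Matrix (Fin n) (Fin q) ℝ) : ℝ :=
  (1 / 2) * ∑ i, ∑ j, ∑ k, ∑ l,
    μ i * X i k * (μ j * X j l) * |((k : ℕ) : ℝ) - ((l : ℕ) : ℝ)|

/-- The feasible set of the relaxed optimal caterpillar problem (ROCP): box constraints,
unique assignment of each vertex, one internal vertex per backbone position, and balance
of vertex degrees (positions `k = 1, ..., q` are represented by `Fin q`, vertex indices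
`i = 1, ..., n` by `Fin n`, internal indices being those with `(i : ℕ) < q`). -/
def ROCPFeasible (n q : ℕ) (d : Fin n → ℕ) (X : Matrix (Fin n) (Fin q) ℝ) : Prop :=
  (∀ i k, 0 ≤ X i k ∧ X i k ≤ 1) ∧
  (∀ i, ∑ k, X i k = 1) ∧
  (∀ k, (∑ i : Fin n, if (i : ℕ) < q then X i k else 0) = 1) ∧
  (∀ k : Fin q, (k : ℕ) ≠ 0 → (k : ℕ) ≠ q - 1 → ∑ i, ((d i : ℝ) - 2) * X i k = 0) ∧
  (∀ k : Fin q, ((k : ℕ) = 0 ∨ (k : ℕ) = q - 1) → ∑ i, ((d i : ℝ) - 2) * X i k = -1)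

/-- A matrix is a symmetric solution if `x_{ik} = x_{i, q-k+1}` for all `i`, `k`. -/
def SymmetricSol {n q : ℕ} (X : Matrix (Fin n) (Fin q) ℝ) : Prop :=
  ∀ i k, X i k = X i k.rev

/-!
Writing `u = μᵀX ∈ ℝ^q`, the objective is `f(X) = ½ uᵀDu` with `D = (|k - l|)`. On the affine
set, `∑ₖ uₖ = ∑ᵢ μᵢ` is constant, so `f` is concave there as soon as `wᵀDw ≤ 0` for every `w`
with `∑ₖ wₖ = 0`. This holds because `|k - l| = ∑ₘ (1[m < k] - 1[m < l])²`, and for a zero-sum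
`w` each kernel `(aₖ - aₗ)²` gives `wᵀ((aₖ - aₗ)²)w = -2 (w ⬝ a)²`.
-/

theorem abs_natCast_sub_eq_sum_sq_indicator {N k l : ℕ} (hk : k ≤ N) (hl : l ≤ N) :
    |(k : ℝ) - l| =
      ∑ m ∈ range N, ((if m < k then 1 else 0) - (if m < l then 1 else 0) : ℝ) ^ 2 := by
  wlog hlk : l ≤ k generalizing k l
  · rw [abs_sub_comm, this hl hk (by omega)]
    exact sum_congr rfl fun m _ => by ring
  have hterm : ∀ m, ((if m < k then 1 else 0) - (if m < l then 1 else 0) : ℝ) ^ 2 =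
      if m ∈ Ico l k then 1 else 0 := by
    intro m
    simp only [mem_Ico]
    split_ifs <;> first | omega | norm_num
  rw [sum_congr rfl fun m _ => hterm m, ← sum_filter, filter_mem_eq_inter, inter_eq_right.mpr,
    sum_const, Nat.card_Ico, nsmul_one, Nat.cast_sub hlk, abs_of_nonneg (by simp [hlk])]
  intro m hm
  simp only [mem_Ico, mem_range] at hm ⊢
  omega

section

variable {ι : Type*} [Fintype ι]

theorem dotProduct_mulVec_sub_sq_of_sum_eq_zero {w : ι → ℝ} (hw : ∑ i, w i = 0) (a : ι → ℝ) :
    w ⬝ᵥ (of (fun i j => (a i - a j) ^ 2) *ᵥ w) = -2 * (w ⬝ᵥ a) ^ 2 := by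
  have hexpand : ∀ i j, w i * (a i - a j) ^ 2 * w j =
      w j * (w i * a i ^ 2) + w i * (w j * a j ^ 2) - 2 * (w i * a i) * (w j * a j) := by
    intros; ring
  rw [dot_mulVec_eq_sum_sum]
  simp only [of_apply, hexpand, sum_sub_distrib, sum_add_distrib, ← mul_sum, ← sum_mul, hw,
    dotProduct]
  ring

theorem dotProduct_mulVec_abs_natCast_sub_nonpos {w : ι → ℝ} (hw : ∑ i, w i = 0) (p : ι → ℕ) :
    w ⬝ᵥ (of (fun i j => |(p i : ℝ) - p j|) *ᵥ w) ≤ 0 := by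
  have hp : ∀ i, p i ≤ univ.sup p := fun i => le_sup (mem_univ i)
  have hsplit : of (fun i j => |(p i : ℝ) - p j|) = ∑ m ∈ range (univ.sup p),
      of fun i j => ((if m < p i then 1 else 0) - (if m < p j then 1 else 0) : ℝ) ^ 2 := by
    ext i j
    simp only [of_apply, Matrix.sum_apply, abs_natCast_sub_eq_sum_sq_indicator (hp i) (hp j)]
  rw [hsplit, sum_mulVec, dotProduct_sum]
  refine sum_nonpos fun m _ => ?_
  rw [dotProduct_mulVec_sub_sq_of_sum_eq_zero hw]
  exact mul_nonpos_of_nonpos_of_nonneg (by norm_num) (sq_nonneg _)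

theorem dotProduct_mulVec_add_of_add_eq_one (C : Matrix ι ι ℝ) (u v : ι → ℝ) {a b : ℝ}
    (hab : a + b = 1) :
    a * (u ⬝ᵥ (C *ᵥ u)) + b * (v ⬝ᵥ (C *ᵥ v)) =
      (a • u + b • v) ⬝ᵥ (C *ᵥ (a • u + b • v)) + a * b * ((u - v) ⬝ᵥ (C *ᵥ (u - v))) := by
  obtain rfl : b = 1 - a := by linarith
  simp only [mulVec_add, mulVec_sub, mulVec_smul, dotProduct_add, add_dotProduct,
    dotProduct_sub, sub_dotProduct, dotProduct_smul, smul_dotProduct, smul_eq_mul]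
  ring

theorem concaveOn_dotProduct_mulVec {C : Matrix ι ι ℝ}
    (hC : ∀ w : ι → ℝ, ∑ i, w i = 0 → w ⬝ᵥ (C *ᵥ w) ≤ 0) (s : ℝ) :
    ConcaveOn ℝ {w | ∑ i, w i = s} fun w => w ⬝ᵥ (C *ᵥ w) := by
  refine ⟨convex_hyperplane ?_ s, fun u hu v hv a b ha hb hab => ?_⟩
  · exact ⟨fun _ _ => sum_add_distrib, fun c w => (mul_sum univ w c).symm⟩
  have hsum : ∑ i, (u - v) i = 0 := by
    simp only [Pi.sub_apply, sum_sub_distrib, hu.out, hv.out, sub_self]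
  simp only [smul_eq_mul, dotProduct_mulVec_add_of_add_eq_one C u v hab]
  exact add_le_of_nonpos_right (mul_nonpos_of_nonneg_of_nonpos (mul_nonneg ha hb) (hC _ hsum))

end

theorem fROCP_eq_dotProduct {n q : ℕ} (μ : Fin n → ℝ) (X : Matrix (Fin n) (Fin q) ℝ) :
    fROCP μ X = 1 / 2 *
      ((μ ᵥ* X) ⬝ᵥ (of (fun k l : Fin q => |((k : ℕ) : ℝ) - ((l : ℕ) : ℝ)|) *ᵥ (μ ᵥ* X))) := by
  rw [fROCP, vecMul_eq_sum, mulVec_sum, dotProduct_sum, sum_comm]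
  congr 1
  refine sum_congr rfl fun i _ => ?_
  rw [sum_dotProduct]
  refine sum_congr rfl fun j _ => ?_
  rw [dot_mulVec_eq_sum_sum, sum_comm]
  refine sum_congr rfl fun k _ => sum_congr rfl fun l _ => ?_
  simp only [Pi.smul_apply, of_apply, smul_eq_mul]
  ring

theorem sum_vecMul_of_sum_row_eq_one {m n : Type*} [Fintype m] [Fintype n] (μ : m → ℝ)
    {X : Matrix m n ℝ} (hX : ∀ i, ∑ k, X i k = 1) : ∑ k, (μ ᵥ* X) k = ∑ i, μ i := by
  have hX1 : X *ᵥ 1 = 1 := funext fun i => by simp [mulVec, dotProduct, hX i]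
  rw [← dotProduct_one, ← dotProduct_mulVec, hX1, dotProduct_one]

theorem fROCP_concave_on_row_sum_one_general (n q : ℕ)
    (μ : Fin n → ℝ)
    (X Y : Matrix (Fin n) (Fin q) ℝ)
    (hX : ∀ i, ∑ k, X i k = 1) (hY : ∀ i, ∑ k, Y i k = 1)
    (t : ℝ) (ht0 : 0 ≤ t) (ht1 : t ≤ 1) :
    t * fROCP μ X + (1 - t) * fROCP μ Y ≤ fROCP μ (t • X + (1 - t) • Y) := by
  have hconc := concaveOn_dotProduct_mulVec
    (fun w hw => dotProduct_mulVec_abs_natCast_sub_nonpos hw (fun k : Fin q => (k : ℕ)))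
    (∑ i, μ i)
  have key := hconc.2 (sum_vecMul_of_sum_row_eq_one μ hX) (sum_vecMul_of_sum_row_eq_one μ hY)
    ht0 (sub_nonneg.2 ht1) (add_sub_cancel t 1)
  simp only [smul_eq_mul] at key
  rw [fROCP_eq_dotProduct, fROCP_eq_dotProduct, fROCP_eq_dotProduct, vecMul_add, vecMul_smul,
    vecMul_smul]
  linarith

theorem fROCP_concave_on_row_sum_one (n q : ℕ) (hnq : q ≤ n) (hq : 4 ≤ q)
    (d : Fin n → ℕ) (μ : Fin n → ℝ)
    (hμ : ∀ i, 0 ≤ μ i)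
    (hd_anti : ∀ i j : Fin n, i ≤ j → d j ≤ d i)
    (hd_sum : ∑ i, d i = 2 * (n - 1))
    (hd_int : ∀ i : Fin n, (i : ℕ) < q → 1 < d i)
    (hd_pend : ∀ i : Fin n, q ≤ (i : ℕ) → d i = 1)
    (X Y : Matrix (Fin n) (Fin q) ℝ)
    (hX : ∀ i, ∑ k, X i k = 1) (hY : ∀ i, ∑ k, Y i k = 1)
    (t : ℝ) (ht0 : 0 ≤ t) (ht1 : t ≤ 1) :
    t * fROCP μ X + (1 - t) * fROCP μ Y ≤ fROCP μ (t • X + (1 - t) • Y) :=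
  fROCP_concave_on_row_sum_one_general n q μ X Y hX hY t ht0 ht1
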